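/- The greedy construction produces a binary de Bruijn sequence: starting from k zeros and repeatedly appending 1 unless this creates a length-k substring already seen (in which case append 0), the resulting sequence of length 2^k, read cyclically, contains every binary string of length k exactly once. -/

import Mathlib

def greedyStep (k : ℕ) (l : List (Fin 2)) : List (Fin 2) :=
  if ¬ ((l ++ [1]).drop (l.length + 1 - k)) <:+: l then l ++ [1]
  else if ¬ ((l ++ [0]).drop (l.length + 1 - k)) <:+: l then l ++ [0]
  else l

def greedySeq (k : ℕ) : List (Fin 2) :=
  (greedyStep k)^[2 ^ k - 1] (List.replicate k 0)

/-!
Along the construction the length-`k` windows stay pairwise distinct, and every window `y0`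
other than the initial `0^k` comes with an occurrence of `y1`, because `0` is appended only after
`1` has been refused.

An occurrence of a word `y` of length `k - 1` at a position `p > 0` is preceded by the symbol at
`p - 1`, and since windows are distinct, different such occurrences are preceded by different
symbols. So `y` has at most two of them, and if it has two then both `0y` and `1y` occur.

When the construction is stuck with final `k - 1` symbols `s`, both `s0` and `s1` occur; if
`s ≠ 0^(k-1)` these and the final `s` would be three occurrences, so `s = 0^(k-1)`, and then
`0^(k-1)1` and the final `s` show that `0^k` and `10^(k-1)` occur. Now if `y0` occurs and
`y ≠ 0^(k-1)`, then `y1` occurs too and again both `0y` and `1y` occur; induction on `z` in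
`y = z 0^(k-1-|z|)` shows that every word occurs.

Counting windows, the stuck sequence has length `2^k + k - 1`, and if the construction has not
stopped after `2^k - 1` steps it has all `2^k` windows and is stuck anyway. Since it starts with
`0^k` and ends with `0^(k-1)`, its first `2^k` symbols read cyclically have the same windows.
-/

namespace DeBruijn

variable {α : Type*}

def window (k : ℕ) (S : List α) (p : ℕ) : List α := (S.drop p).take k

def WindowsInjective (k : ℕ) (S : List α) : Prop :=
  ∀ p q, p + k ≤ S.length → q + k ≤ S.length → window k S p = window k S q → p = q

section Window

variable {k p : ℕ} {S : List α}

theorem length_window (h : p + k ≤ S.length) : (window k S p).length = k := by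
  simp [window]; omega

theorem window_isInfix (k p : ℕ) (S : List α) : window k S p <:+: S :=
  (List.take_prefix k _).isInfix.trans (List.drop_suffix p S).isInfix

theorem isInfix_iff_exists_window {W : List α} (hW : W.length = k) :
    W <:+: S ↔ ∃ p, p + k ≤ S.length ∧ window k S p = W := by
  constructor
  · rintro ⟨s, t, rfl⟩
    refine ⟨s.length, by simp only [List.length_append, hW]; omega, ?_⟩
    rw [window, List.append_assoc, List.drop_left, ← hW, List.take_left]
  · rintro ⟨p, -, rfl⟩
    exact window_isInfix k p S

theorem window_append (T : List α) (h : p + k ≤ S.length) :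
    window k (S ++ T) p = window k S p := by
  rw [window, List.drop_append_of_le_length (by omega),
    List.take_append_of_le_length (by simp; omega), window]

theorem window_sub_length (k : ℕ) (S : List α) :
    window k S (S.length - k) = S.drop (S.length - k) :=
  List.take_of_length_le (by simp; omega)

theorem window_succ_append_singleton (c : α) (h : k ≤ S.length) :
    window (k + 1) (S ++ [c]) (S.length - k) = S.drop (S.length - k) ++ [c] := by
  rw [window, List.drop_append_of_le_length (by omega)]
  exact List.take_of_length_le (by simp; omega)

theorem take_window {m : ℕ} (h : m ≤ k) : (window k S p).take m = window m S p := by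
  rw [window, window, List.take_take, min_eq_left h]

theorem window_succ (d : α) (h : p < S.length) :
    window (k + 1) S p = S.getD p d :: window k S (p + 1) := by
  rw [window, List.drop_eq_getElem_cons h, List.take_succ_cons, List.getD_eq_getElem _ _ h, window]

theorem window_eq_ofFn (d : α) (h : p + k ≤ S.length) :
    window k S p = List.ofFn fun j : Fin k => S.getD (p + j) d := by
  refine List.ext_getElem (by simp [length_window h]) fun j _ hj => ?_
  have hpj : p + j < S.length := by simp at hj; omega
  simp [window, List.getElem?_eq_getElem hpj]

theorem getD_mod_eq_getD {N m t : ℕ} (hm : m ≤ N) (hwrap : S.drop N = S.take m) (d : α)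
    (ht : t < N + m) : S.getD (t % N) d = S.getD t d := by
  rcases lt_or_ge t N with htN | htN
  · rw [Nat.mod_eq_of_lt htN]
  · have hmod : t % N = t - N := by
      rw [Nat.mod_eq_sub_mod htN, Nat.mod_eq_of_lt (by omega)]
    have := congrArg (fun l => l.getD (t - N) d) hwrap
    simp only [List.getD_eq_getElem?_getD, List.getElem?_drop, List.getElem?_take,
      if_pos (show t - N < m by omega), Nat.add_sub_cancel' htN] at this ⊢
    rw [hmod, this]

theorem WindowsInjective.forall_isInfix_iff [Fintype α] (h : WindowsInjective k S) :
    (∀ W : List α, W.length = k → W <:+: S) ↔ S.length + 1 - k = Fintype.card α ^ k := by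
  let f : Fin (S.length + 1 - k) → List.Vector α k :=
    fun p => ⟨window k S p, length_window (by omega)⟩
  have hf : f.Injective := fun p q hpq =>
    Fin.ext (h p q (by omega) (by omega) (congrArg Subtype.val hpq))
  have hsurj : f.Surjective ↔ ∀ W : List α, W.length = k → W <:+: S := by
    constructor
    · intro hs W hW
      obtain ⟨p, hp⟩ := hs ⟨W, hW⟩
      exact (isInfix_iff_exists_window hW).2 ⟨p, by omega, congrArg Subtype.val hp⟩
    · intro hall W
      obtain ⟨p, hp, hpW⟩ := (isInfix_iff_exists_window W.2).1 (hall W.1 W.2)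
      exact ⟨⟨p, by omega⟩, Subtype.ext hpW⟩
  have hcard : Fintype.card (Fin (S.length + 1 - k)) = Fintype.card (List.Vector α k) ↔
      S.length + 1 - k = Fintype.card α ^ k := by
    rw [Fintype.card_fin, card_vector]
  rw [← hsurj, ← hcard]
  exact ⟨fun hs => Fintype.card_of_bijective ⟨hf, hs⟩,
    fun hc => ((Fintype.bijective_iff_injective_and_card f).2 ⟨hf, hc⟩).2⟩

end Window

theorem _root_.Fin.two_eq_or_eq_of_ne {a b : Fin 2} (hab : a ≠ b) (c : Fin 2) :
    c = a ∨ c = b := by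
  revert a b c; decide

theorem iterate_eq_self_or_length {f : List α → List α}
    (hf : ∀ l, f l = l ∨ (f l).length = l.length + 1) (l : List α) (m : ℕ) :
    f (f^[m] l) = f^[m] l ∨ (f^[m] l).length = l.length + m := by
  induction m with
  | zero => exact Or.inr rfl
  | succ m ih =>
    rw [Function.iterate_succ_apply']
    rcases ih with h | h
    · exact Or.inl (by rw [h, h])
    · rcases hf (f^[m] l) with h' | h'
      · exact Or.inl (by rw [h', h'])
      · exact Or.inr (by rw [h', h]; omega)

theorem greedyStep_eq_self_or_length (k : ℕ) (S : List (Fin 2)) :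
    greedyStep k S = S ∨ (greedyStep k S).length = S.length + 1 := by
  unfold greedyStep
  split_ifs <;> simp

theorem greedyStep_succ_eq (k : ℕ) (S : List (Fin 2)) :
    greedyStep (k + 1) S =
      if ¬ (S.drop (S.length - k) ++ [1]) <:+: S then S ++ [1]
      else if ¬ (S.drop (S.length - k) ++ [0]) <:+: S then S ++ [0] else S := by
  simp only [greedyStep, Nat.add_sub_add_right,
    List.drop_append_of_le_length (Nat.sub_le S.length k)]

theorem greedyStep_succ_eq_self_iff {k : ℕ} {S : List (Fin 2)} :
    greedyStep (k + 1) S = S ↔ ∀ c : Fin 2, (S.drop (S.length - k) ++ [c]) <:+: S := by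
  rw [greedyStep_succ_eq, Fin.forall_fin_two]
  split_ifs <;> simp_all

structure GreedyInv (k : ℕ) (S : List (Fin 2)) : Prop where
  replicate_prefix : List.replicate k 0 <+: S
  windowsInjective : WindowsInjective k S
  one_isInfix_of_zero : ∀ p y, p + 1 + k ≤ S.length → window k S (p + 1) = y ++ [0] →
    (y ++ [1]) <:+: S

theorem greedyInv_replicate (k : ℕ) : GreedyInv k (List.replicate k 0) where
  replicate_prefix := List.prefix_refl _
  windowsInjective p q hp hq _ := by simp only [List.length_replicate] at hp hq; omega
  one_isInfix_of_zero p y hp _ := by simp only [List.length_replicate] at hp; omega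

namespace GreedyInv

variable {k : ℕ} {S : List (Fin 2)}

theorem length_le (h : GreedyInv k S) : k ≤ S.length := by
  simpa using h.replicate_prefix.length_le

theorem window_zero (h : GreedyInv k S) : window k S 0 = List.replicate k 0 := by
  have := List.prefix_iff_eq_take.1 h.replicate_prefix
  rw [List.length_replicate] at this
  rw [window, List.drop_zero, ← this]

theorem append (h : GreedyInv (k + 1) S) {c : Fin 2}
    (hnew : ¬ (S.drop (S.length - k) ++ [c]) <:+: S)
    (hone : c = 0 → (S.drop (S.length - k) ++ [1]) <:+: S) :
    GreedyInv (k + 1) (S ++ [c]) := by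
  have hk := h.length_le
  have hlast := window_succ_append_singleton c (show k ≤ S.length by omega)
  have hsplit : ∀ p, p + (k + 1) ≤ (S ++ [c]).length →
      p + (k + 1) ≤ S.length ∨ p = S.length - k := by simp; omega
  have hS : S <:+: S ++ [c] := (List.prefix_append S [c]).isInfix
  refine ⟨h.replicate_prefix.trans (List.prefix_append S [c]), ?_, ?_⟩
  · intro p q hp hq hpq
    rcases hsplit p hp with hp | rfl <;> rcases hsplit q hq with hq | rfl
    · rw [window_append _ hp, window_append _ hq] at hpq
      exact h.windowsInjective p q hp hq hpq
    · rw [window_append _ hp, hlast] at hpq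
      exact absurd (hpq ▸ window_isInfix _ _ _) hnew
    · rw [window_append _ hq, hlast] at hpq
      exact absurd (hpq.symm ▸ window_isInfix _ _ _) hnew
    · rfl
  · intro p y hp hpy
    rcases hsplit (p + 1) (by omega) with hp | hp
    · rw [window_append _ hp] at hpy
      exact (h.one_isInfix_of_zero p y (by omega) hpy).trans hS
    · rw [hp, hlast] at hpy
      obtain ⟨rfl, hc⟩ := List.append_inj' hpy rfl
      exact (hone (by simpa using hc)).trans hS

theorem step (h : GreedyInv (k + 1) S) : GreedyInv (k + 1) (greedyStep (k + 1) S) := by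
  rw [greedyStep_succ_eq]
  split_ifs with h1 h0
  · exact h
  · exact h.append h0 fun _ => h1
  · exact h.append h1 fun h10 => absurd h10 (by decide)

theorem exists_window_succ_eq (h : GreedyInv k S) {W : List (Fin 2)} (hW : W <:+: S)
    (hlen : W.length = k) (hne : W ≠ List.replicate k 0) :
    ∃ p, p + 1 + k ≤ S.length ∧ window k S (p + 1) = W := by
  obtain ⟨_ | p, hp, hpW⟩ := (isInfix_iff_exists_window hlen).1 hW
  · exact absurd (by rw [← hpW, h.window_zero]) hne
  · exact ⟨p, hp, hpW⟩

theorem exists_window_eq_append (h : GreedyInv (k + 1) S) {y : List (Fin 2)} {c : Fin 2}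
    (hy : y.length = k) (hyc : (y ++ [c]) <:+: S) (hne : y ++ [c] ≠ List.replicate (k + 1) 0) :
    ∃ p, p + 1 + k < S.length ∧ window (k + 1) S (p + 1) = y ++ [c] ∧
      window k S (p + 1) = y := by
  obtain ⟨p, hp, hpy⟩ := h.exists_window_succ_eq hyc (by simp [hy]) hne
  refine ⟨p, by omega, hpy, ?_⟩
  rw [← take_window k.le_succ, hpy, List.take_left' hy]

theorem getD_ne_of_window_eq (h : GreedyInv (k + 1) S) {p q : ℕ} (hpq : p ≠ q)
    (hp : p + 1 + k ≤ S.length) (hq : q + 1 + k ≤ S.length)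
    (hw : window k S (p + 1) = window k S (q + 1)) : S.getD p 0 ≠ S.getD q 0 := fun he =>
  hpq <| h.windowsInjective p q (by omega) (by omega) <| by
    rw [window_succ 0 (by omega), window_succ 0 (by omega), hw, he]

theorem cons_isInfix_of_window_eq (h : GreedyInv (k + 1) S) {p q : ℕ} (hpq : p ≠ q)
    (hp : p + 1 + k ≤ S.length) (hq : q + 1 + k ≤ S.length)
    (hw : window k S (p + 1) = window k S (q + 1)) (c : Fin 2) :
    (c :: window k S (p + 1)) <:+: S := by
  rcases Fin.two_eq_or_eq_of_ne (h.getD_ne_of_window_eq hpq hp hq hw) c with rfl | rfl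
  · rw [← window_succ 0 (by omega)]
    exact window_isInfix _ _ _
  · rw [hw, ← window_succ 0 (by omega)]
    exact window_isInfix _ _ _

theorem false_of_three_window_eq (h : GreedyInv (k + 1) S) {p q r : ℕ} (hpq : p ≠ q)
    (hpr : p ≠ r) (hqr : q ≠ r) (hp : p + 1 + k ≤ S.length) (hq : q + 1 + k ≤ S.length)
    (hr : r + 1 + k ≤ S.length) (hwq : window k S (p + 1) = window k S (q + 1))
    (hwr : window k S (p + 1) = window k S (r + 1)) : False := by
  rcases Fin.two_eq_or_eq_of_ne (h.getD_ne_of_window_eq hpq hp hq hwq) (S.getD r 0) with e | e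
  · exact h.getD_ne_of_window_eq hpr hp hr hwr e.symm
  · exact h.getD_ne_of_window_eq hqr hq hr (hwq.symm.trans hwr) e.symm

theorem window_last (h : GreedyInv (k + 1) S) :
    window k S (S.length - (k + 1) + 1) = S.drop (S.length - k) := by
  have := h.length_le
  rw [show S.length - (k + 1) + 1 = S.length - k by omega, window_sub_length]

theorem drop_eq_replicate_of_stuck (h : GreedyInv (k + 1) S)
    (hstuck : ∀ c : Fin 2, (S.drop (S.length - k) ++ [c]) <:+: S) :
    S.drop (S.length - k) = List.replicate k 0 := by
  have hk := h.length_le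
  have hs : (S.drop (S.length - k)).length = k := by simp; omega
  by_contra hne
  obtain ⟨p, hp, hp0, hps⟩ := h.exists_window_eq_append hs (hstuck 0)
    (by simpa [List.append_eq_replicate_iff, hs] using hne)
  obtain ⟨q, hq, hq1, hqs⟩ := h.exists_window_eq_append hs (hstuck 1)
    (by simp [List.append_eq_replicate_iff])
  have hpq : p ≠ q := by rintro rfl; simp [hp0] at hq1
  exact h.false_of_three_window_eq hpq (by omega) (by omega) (by omega) (by omega) (by omega)
    (hps.trans hqs.symm) (hps.trans h.window_last.symm)

theorem cons_replicate_isInfix_of_stuck (h : GreedyInv (k + 1) S)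
    (hstuck : ∀ c : Fin 2, (S.drop (S.length - k) ++ [c]) <:+: S) (c : Fin 2) :
    (c :: List.replicate k 0) <:+: S := by
  have hk := h.length_le
  have hzero := h.drop_eq_replicate_of_stuck hstuck
  obtain ⟨q, hq, -, hqs⟩ := h.exists_window_eq_append (by simp) (hzero ▸ hstuck 1)
    (by simp [List.append_eq_replicate_iff])
  have := h.cons_isInfix_of_window_eq (p := q) (q := S.length - (k + 1)) (by omega) (by omega)
    (by omega) (by rw [hqs, h.window_last, hzero]) c
  rwa [hqs] at this

theorem cons_isInfix_of_append_zero_isInfix (h : GreedyInv (k + 1) S)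
    (hstuck : ∀ c : Fin 2, (S.drop (S.length - k) ++ [c]) <:+: S) {y : List (Fin 2)}
    (hy : y.length = k) (hy0 : (y ++ [0]) <:+: S) (c : Fin 2) : (c :: y) <:+: S := by
  by_cases hyz : y = List.replicate k 0
  · subst hyz
    exact h.cons_replicate_isInfix_of_stuck hstuck c
  obtain ⟨p, hp, hpy0, hpy⟩ := h.exists_window_eq_append hy hy0
    (by simpa [List.append_eq_replicate_iff, hy] using hyz)
  obtain ⟨q, hq, hqy1, hqy⟩ := h.exists_window_eq_append hy
    (h.one_isInfix_of_zero p y (by omega) hpy0) (by simp [List.append_eq_replicate_iff])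
  have hpq : p ≠ q := by rintro rfl; simp [hpy0] at hqy1
  simpa [hpy] using h.cons_isInfix_of_window_eq hpq (by omega) (by omega) (hpy.trans hqy.symm) c

theorem forall_isInfix_of_stuck (h : GreedyInv (k + 1) S)
    (hstuck : ∀ c : Fin 2, (S.drop (S.length - k) ++ [c]) <:+: S) :
    ∀ W : List (Fin 2), W.length = k + 1 → W <:+: S := by
  have key : ∀ z : List (Fin 2), z.length ≤ k → ∀ c : Fin 2,
      (c :: (z ++ List.replicate (k - z.length) 0)) <:+: S := by
    intro z
    induction z with
    | nil => intro _ c; simpa using h.cons_replicate_isInfix_of_stuck hstuck c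
    | cons a z ih =>
      intro hz c
      simp only [List.length_cons] at hz ⊢
      refine h.cons_isInfix_of_append_zero_isInfix hstuck (by simp; omega) ?_ c
      have hz' : k - z.length = k - (z.length + 1) + 1 := by omega
      have := ih (by omega) a
      rwa [hz', List.replicate_succ', ← List.append_assoc, ← List.cons_append] at this
  rintro (_ | ⟨c, y⟩) hW
  · simp at hW
  · have hy : y.length = k := by simpa using hW
    simpa [hy] using key y hy.le c

end GreedyInv

theorem greedyInv_iterate (k m : ℕ) :
    GreedyInv (k + 1) ((greedyStep (k + 1))^[m] (List.replicate (k + 1) 0)) := by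
  induction m with
  | zero => exact greedyInv_replicate (k + 1)
  | succ m ih => rw [Function.iterate_succ_apply']; exact ih.step

theorem greedySeq_spec (k : ℕ) :
    GreedyInv (k + 1) (greedySeq (k + 1)) ∧ (greedySeq (k + 1)).length = 2 ^ (k + 1) + k ∧
      (greedySeq (k + 1)).drop (2 ^ (k + 1)) = (greedySeq (k + 1)).take k := by
  have h : GreedyInv (k + 1) (greedySeq (k + 1)) := greedyInv_iterate k _
  set S := greedySeq (k + 1)
  have hk := h.length_le
  have hcount := h.windowsInjective.forall_isInfix_iff
  rw [Fintype.card_fin] at hcount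
  have hstuck : ∀ c : Fin 2, (S.drop (S.length - k) ++ [c]) <:+: S := by
    rcases iterate_eq_self_or_length (greedyStep_eq_self_or_length (k + 1))
      (List.replicate (k + 1) 0) (2 ^ (k + 1) - 1) with hfix | hlen
    · exact greedyStep_succ_eq_self_iff.1 hfix
    · have hlen' : S.length = k + 1 + (2 ^ (k + 1) - 1) := by
        rw [List.length_replicate] at hlen; exact hlen
      have hall := hcount.2 (by have := Nat.one_le_two_pow (n := k + 1); omega)
      exact fun c => hall _ (by simp; omega)
  have hlen : S.length = 2 ^ (k + 1) + k := by
    have := hcount.1 (h.forall_isInfix_of_stuck hstuck)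
    omega
  refine ⟨h, hlen, ?_⟩
  have htake : S.take k = List.replicate k 0 := by
    have := take_window (S := S) (p := 0) k.le_succ
    rw [h.window_zero, List.take_replicate, min_eq_left k.le_succ] at this
    simpa [window] using this.symm
  rw [htake, ← h.drop_eq_replicate_of_stuck hstuck, hlen, Nat.add_sub_cancel]

end DeBruijn

/-- The greedy construction produces a binary de Bruijn sequence: the first
`2^k` symbols of the greedy sequence, read cyclically, contain every binary
string of length `k` exactly once as a cyclic substring. -/
theorem greedy_deBruijn (k : ℕ) (hk : 1 ≤ k) :
    ∀ w : Fin k → Fin 2,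
      ∃! i : ZMod (2 ^ k),
        ∀ j : Fin k, (greedySeq k).getD ((i + (j : ℕ)).val) 0 = w j := by
  obtain ⟨k, rfl⟩ := Nat.exists_eq_add_of_le' hk
  obtain ⟨h, hlen, hwrap⟩ := DeBruijn.greedySeq_spec k
  set S := greedySeq (k + 1)
  let f : ZMod (2 ^ (k + 1)) → Fin (k + 1) → Fin 2 := fun i j => S.getD (i + (j : ℕ)).val 0
  have hwindow : ∀ i, DeBruijn.window (k + 1) S i.val = List.ofFn (f i) := by
    intro i
    have hi := ZMod.val_lt i
    have hk2 := Nat.lt_two_pow_self (n := k + 1)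
    rw [DeBruijn.window_eq_ofFn 0 (by omega)]
    congr 1
    funext j
    simp only [f]
    rw [ZMod.val_add, ZMod.val_natCast, Nat.add_mod_mod,
      DeBruijn.getD_mod_eq_getD (by omega) hwrap 0 (by omega)]
  have hinj : f.Injective := fun i i' hii' => ZMod.val_injective _ <|
    h.windowsInjective _ _ (by have := ZMod.val_lt i; omega) (by have := ZMod.val_lt i'; omega)
      (by rw [hwindow, hwindow, hii'])
  have hbij := (Fintype.bijective_iff_injective_and_card f).2 ⟨hinj, by simp⟩
  intro w
  simpa only [funext_iff] using hbij.existsUnique w
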